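/- Every connected weighted graph G with terminal set S of size |S| ≥ 2 contains a spanning tree T such that Σ_{u,w∈S} d_T(u,w) ≤ (2 − 2/|S|) · Σ_{u,w∈S} d_G(u,w). -/

import Mathlib

/-!
Take a shortest-path tree `T` of `G` rooted at a vertex `r` minimising `∑_{x ∈ S} d_G(r, x)`,
so that `d_T(r, ·) = d_G(r, ·)`. Routing each pair `u ≠ x` of `S` through `r` gives
`∑_{u, x ∈ S} d_T(u, x) ≤ 2 (|S| - 1) ∑_{x ∈ S} d_G(r, x)`, and by the choice of `r`,
`|S| ∑_{x ∈ S} d_G(r, x) ≤ ∑_{u, x ∈ S} d_G(u, x)`.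
-/

open SimpleGraph Finset
open scoped Classical

/-- The total weight of a walk in a graph with edge-weight function `w`. -/
noncomputable def walkW {V : Type*} (w : V → V → ℝ) {G : SimpleGraph V} {u v : V}
    (p : G.Walk u v) : ℝ :=
  (p.darts.map (fun d => w d.toProd.1 d.toProd.2)).sum

/-- The weighted shortest-path distance between `u` and `v` in `G`. -/
noncomputable def wdist {V : Type*} (G : SimpleGraph V) (w : V → V → ℝ) (u v : V) : ℝ :=
  sInf {x : ℝ | ∃ p : G.Walk u v, walkW w p = x}

/-- The `S`-routing cost of `G`: sum of distances over ordered pairs from `S`. -/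
noncomputable def RC {V : Type*} (G : SimpleGraph V) (w : V → V → ℝ) (S : Finset V) : ℝ :=
  ∑ u ∈ S, ∑ v ∈ S, wdist G w u v

/-- The single-source routing cost from `v` to the nodes of `S`. -/
noncomputable def SSRC {V : Type*} (G : SimpleGraph V) (w : V → V → ℝ) (S : Finset V)
    (v : V) : ℝ :=
  ∑ u ∈ S, wdist G w v u

/-- The set of terminals of `S` lying in the component of `a` after deleting edge `s(a,b)`. -/
noncomputable def Zcomp {V : Type*} (T : SimpleGraph V) (S : Finset V) (a b : V) : Finset V :=
  S.filter (fun z => (T.deleteEdges {s(a, b)}).Reachable a z)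

section WeightedDistance

variable {V : Type*} {w : V → V → ℝ} {H : SimpleGraph V} {u v x : V}

lemma walkW_nil : walkW w (Walk.nil : H.Walk u u) = 0 := rfl

lemma walkW_cons (h : H.Adj u v) (p : H.Walk v x) :
    walkW w (Walk.cons h p) = w u v + walkW w p := by
  simp [walkW]

lemma walkW_append (p : H.Walk u v) (q : H.Walk v x) :
    walkW w (p.append q) = walkW w p + walkW w q := by
  simp [walkW, Walk.darts_append]

lemma walkW_concat (p : H.Walk u v) (h : H.Adj v x) :
    walkW w (p.concat h) = walkW w p + w v x := by
  simp [walkW, Walk.darts_concat]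

lemma walkW_reverse (hsymm : ∀ a b, w a b = w b a) (p : H.Walk u v) :
    walkW w p.reverse = walkW w p := by
  simp only [walkW, Walk.darts_reverse, List.map_reverse, List.sum_reverse, List.map_map]
  exact congrArg List.sum (List.map_congr_left fun d _ => (hsymm _ _).symm)

variable (hw : ∀ a b, H.Adj a b → 0 ≤ w a b)
include hw

lemma walkW_nonneg (p : H.Walk u v) : 0 ≤ walkW w p :=
  List.sum_nonneg <| by
    simp only [List.mem_map]
    rintro _ ⟨d, -, rfl⟩
    exact hw _ _ d.adj

lemma walkW_bypass_le (p : H.Walk u v) : walkW w p.bypass ≤ walkW w p :=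
  (p.darts_bypass_sublist_darts.map _).sum_le_sum <| by
    simp only [List.mem_map]
    rintro _ ⟨d, -, rfl⟩
    exact hw _ _ d.adj

lemma wdist_le_walkW (p : H.Walk u v) : wdist H w u v ≤ walkW w p :=
  csInf_le ⟨0, by rintro _ ⟨q, rfl⟩; exact walkW_nonneg hw q⟩ ⟨p, rfl⟩

lemma wdist_nonneg (u v : V) : 0 ≤ wdist H w u v :=
  Real.sInf_nonneg <| by
    rintro _ ⟨q, rfl⟩
    exact walkW_nonneg hw q

lemma wdist_self (u : V) : wdist H w u u = 0 :=
  le_antisymm (wdist_le_walkW hw Walk.nil) (wdist_nonneg hw u u)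

variable [Fintype V]

lemma exists_walkW_eq_wdist (h : H.Reachable u v) :
    ∃ p : H.Walk u v, walkW w p = wdist H w u v := by
  obtain ⟨q⟩ := h
  obtain ⟨p, -, hp⟩ := Finset.exists_min_image univ (fun p : H.Path u v => walkW w p.1)
    ⟨⟨q.bypass, q.bypass_isPath⟩, mem_univ _⟩
  refine ⟨p.1, le_antisymm (le_csInf ⟨_, p.1, rfl⟩ ?_) (wdist_le_walkW hw _)⟩
  rintro _ ⟨q, rfl⟩
  exact (hp ⟨q.bypass, q.bypass_isPath⟩ (mem_univ _)).trans (walkW_bypass_le hw q)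

lemma wdist_triangle {r : V} (h₁ : H.Reachable u r) (h₂ : H.Reachable r x) :
    wdist H w u x ≤ wdist H w u r + wdist H w r x := by
  obtain ⟨p, hp⟩ := exists_walkW_eq_wdist hw h₁
  obtain ⟨q, hq⟩ := exists_walkW_eq_wdist hw h₂
  calc wdist H w u x ≤ walkW w (p.append q) := wdist_le_walkW hw _
    _ = wdist H w u r + wdist H w r x := by rw [walkW_append, hp, hq]

lemma wdist_le_wdist_reverse (hsymm : ∀ a b, w a b = w b a) (h : H.Reachable v u) :
    wdist H w u v ≤ wdist H w v u := by
  obtain ⟨p, hp⟩ := exists_walkW_eq_wdist hw h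
  calc wdist H w u v ≤ walkW w p.reverse := wdist_le_walkW hw _
    _ = wdist H w v u := by rw [walkW_reverse hsymm, hp]

lemma wdist_comm (hsymm : ∀ a b, w a b = w b a) (h : H.Reachable u v) :
    wdist H w u v = wdist H w v u :=
  le_antisymm (wdist_le_wdist_reverse hw hsymm h.symm) (wdist_le_wdist_reverse hw hsymm h)

omit hw in
lemma wdist_le_wdist_of_le {G : SimpleGraph V} (hle : H ≤ G)
    (hwG : ∀ a b, G.Adj a b → 0 ≤ w a b) (h : H.Reachable u v) : wdist G w u v ≤ wdist H w u v := by
  obtain ⟨p, hp⟩ := exists_walkW_eq_wdist (fun a b hab => hwG a b (hle hab)) h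
  calc wdist G w u v ≤ walkW w (p.mapLe hle) := wdist_le_walkW hwG _
    _ = wdist H w u v := by rw [← hp]; simp [walkW, Walk.mapLe]; rfl

end WeightedDistance

section ParentGraph

variable {V α : Type*} [Preorder α] (r : V) (P : V → V)

def parentGraph : SimpleGraph V := fromRel fun v u => v ≠ r ∧ P v = u

variable {r P}

lemma parentGraph_le {G : SimpleGraph V} (h : ∀ v, v ≠ r → G.Adj (P v) v) :
    parentGraph r P ≤ G := by
  intro a b hab
  rcases (fromRel_adj _ a b).1 hab with ⟨-, ⟨ha, rfl⟩ | ⟨hb, rfl⟩⟩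
  · exact (h a ha).symm
  · exact h b hb

variable {D : V → α} (hP : ∀ v, v ≠ r → D (P v) < D v)
include hP

lemma parentGraph_adj_parent {v : V} (hv : v ≠ r) : (parentGraph r P).Adj (P v) v :=
  (fromRel_adj _ _ _).2 ⟨fun h => (hP v hv).ne (congrArg D h), Or.inr ⟨hv, rfl⟩⟩

lemma parentGraph_parent_injective {v v' : V} (hv : v ≠ r) (hv' : v' ≠ r)
    (h : s(P v, v) = s(P v', v')) : v = v' := by
  rcases Sym2.eq_iff.1 h with ⟨-, h⟩ | ⟨h, h'⟩
  · exact h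
  · have h₁ : D v' < D v := by rw [← h]; exact hP v hv
    have h₂ : D v < D v' := by rw [h']; exact hP v' hv'
    exact absurd (h₁.trans h₂) (lt_irrefl _)

lemma card_edgeSet_parentGraph :
    Nat.card (parentGraph r P).edgeSet = Nat.card {v // v ≠ r} := by
  refine (Nat.card_eq_of_bijective
    (fun v : {v // v ≠ r} => (⟨s(P v, v), parentGraph_adj_parent hP v.2⟩ :
      (parentGraph r P).edgeSet)) ⟨?_, ?_⟩).symm
  · rintro ⟨v, hv⟩ ⟨v', hv'⟩ h
    exact Subtype.ext (parentGraph_parent_injective hP hv hv' (congrArg Subtype.val h))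
  · rintro ⟨e, he⟩
    induction e using Sym2.ind with
    | h a b =>
      rcases (fromRel_adj _ a b).1 ((mem_edgeSet _).1 he) with ⟨-, ⟨ha, rfl⟩ | ⟨hb, rfl⟩⟩
      · exact ⟨⟨a, ha⟩, Subtype.ext Sym2.eq_swap⟩
      · exact ⟨⟨b, hb⟩, rfl⟩

variable [Finite V]

lemma parent_induction {p : V → Prop} (hr : p r) (hstep : ∀ v, v ≠ r → p (P v) → p v)
    (v : V) : p v :=
  (Finite.wellFounded_of_trans_of_irrefl (InvImage (· < ·) D)).induction v fun v ih =>
    if hv : v = r then hv ▸ hr else hstep v hv (ih _ (hP v hv))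

lemma parentGraph_reachable (v : V) : (parentGraph r P).Reachable r v :=
  parent_induction hP .rfl (fun _ hv h => h.trans (parentGraph_adj_parent hP hv).reachable) v

lemma parentGraph_connected : (parentGraph r P).Connected :=
  (connected_iff _).2
    ⟨fun u v => (parentGraph_reachable hP u).symm.trans (parentGraph_reachable hP v), ⟨r⟩⟩

lemma parentGraph_isTree : (parentGraph r P).IsTree := by
  refine isTree_iff_connected_and_card.2 ⟨parentGraph_connected hP, ?_⟩
  have := Fintype.ofFinite V
  simp only [card_edgeSet_parentGraph hP, Nat.card_eq_fintype_card, ne_eq,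
    Fintype.card_subtype_compl, Fintype.card_unique]
  have := Fintype.card_pos_iff.2 ⟨r⟩
  omega

end ParentGraph

section ShortestPathTree

variable {V : Type*} [Fintype V] {G : SimpleGraph V} {w : V → V → ℝ} {r : V}

lemma wdist_parentGraph_le {P : V → V} {D : V → ℝ} (hP : ∀ v, v ≠ r → D (P v) < D v)
    (hw : ∀ a b, (parentGraph r P).Adj a b → 0 ≤ w a b)
    (hD : ∀ v, v ≠ r → D (P v) + w (P v) v ≤ D v) (hr : 0 ≤ D r) (v : V) :
    wdist (parentGraph r P) w r v ≤ D v := by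
  refine parent_induction hP (p := fun v => wdist (parentGraph r P) w r v ≤ D v)
    (by rwa [wdist_self hw]) (fun v hv ih => ?_) v
  obtain ⟨p, hp⟩ := exists_walkW_eq_wdist hw (parentGraph_reachable hP (P v))
  calc wdist (parentGraph r P) w r v
      ≤ walkW w (p.concat (parentGraph_adj_parent hP hv)) := wdist_le_walkW hw _
    _ = wdist (parentGraph r P) w r (P v) + w (P v) v := by rw [walkW_concat, hp]
    _ ≤ D v := by linarith [hD v hv]

lemma exists_adj_wdist_add_eq (hw : ∀ a b, G.Adj a b → 0 ≤ w a b) {v : V}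
    (h : G.Reachable r v) (hv : v ≠ r) :
    ∃ u, G.Adj u v ∧ wdist G w r u + w u v = wdist G w r v := by
  obtain ⟨p, hp⟩ := exists_walkW_eq_wdist hw h
  obtain ⟨u, hvu, q, hq⟩ := Walk.exists_eq_cons_of_ne hv p.reverse
  have hpq : walkW w p = walkW w q.reverse + w u v := by
    rw [← p.reverse_reverse, hq, Walk.reverse_cons, walkW_append, walkW_cons, walkW_nil,
      add_zero]
  obtain ⟨p', hp'⟩ := exists_walkW_eq_wdist hw (h.trans hvu.reachable)
  refine ⟨u, hvu.symm, le_antisymm ?_ ?_⟩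
  · calc wdist G w r u + w u v ≤ walkW w q.reverse + w u v := by
          grw [wdist_le_walkW hw q.reverse]
      _ = wdist G w r v := by rw [← hpq, hp]
  · calc wdist G w r v ≤ walkW w (p'.concat hvu.symm) := wdist_le_walkW hw _
      _ = wdist G w r u + w u v := by rw [walkW_concat, hp']

theorem exists_isTree_le_wdist_eq (hconn : G.Connected)
    (hpos : ∀ a b, G.Adj a b → 0 < w a b) (r : V) :
    ∃ T ≤ G, T.IsTree ∧ ∀ v, wdist T w r v = wdist G w r v := by
  have hw : ∀ a b, G.Adj a b → 0 ≤ w a b := fun a b h => (hpos a b h).le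
  choose! P hPadj hPeq using fun v (hv : v ≠ r) =>
    exists_adj_wdist_add_eq hw (hconn.preconnected r v) hv
  -- Positive weights make `d_G(r, ·)` strictly decrease along parent pointers.
  have hP : ∀ v, v ≠ r → wdist G w r (P v) < wdist G w r v := fun v hv => by
    linarith [hPeq v hv, hpos _ _ (hPadj v hv)]
  have hle : parentGraph r P ≤ G := parentGraph_le hPadj
  refine ⟨parentGraph r P, hle, parentGraph_isTree hP, fun v => le_antisymm ?_ ?_⟩
  · exact wdist_parentGraph_le hP (fun a b h => hw a b (hle h)) (fun v hv => (hPeq v hv).le)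
      (wdist_self hw r).ge v
  · exact wdist_le_wdist_of_le hle hw (parentGraph_reachable hP v)

end ShortestPathTree

lemma RC_le_two_mul_SSRC {V : Type*} [Fintype V] {H : SimpleGraph V} {w : V → V → ℝ}
    (hH : H.Preconnected) (hw : ∀ a b, H.Adj a b → 0 ≤ w a b) (hsymm : ∀ a b, w a b = w b a)
    (S : Finset V) (r : V) :
    RC H w S ≤ 2 * (#S - 1) * SSRC H w S r := by
  have hrow : ∀ u ∈ S,
      SSRC H w S u ≤ (#S - 1) * wdist H w r u + (SSRC H w S r - wdist H w r u) := by
    intro u hu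
    rw [SSRC, ← add_sum_erase S _ hu, wdist_self hw, zero_add]
    calc ∑ x ∈ S.erase u, wdist H w u x
        ≤ ∑ x ∈ S.erase u, (wdist H w r u + wdist H w r x) := sum_le_sum fun x _ => by
          rw [← wdist_comm hw hsymm (hH u r)]
          exact wdist_triangle hw (hH u r) (hH r x)
      _ = _ := by
          rw [sum_add_distrib, sum_const, nsmul_eq_mul, cast_card_erase_of_mem hu, SSRC,
            ← add_sum_erase S _ hu]
          ring
  calc RC H w S = ∑ u ∈ S, SSRC H w S u := rfl
    _ ≤ ∑ u ∈ S, ((#S - 1) * wdist H w r u + (SSRC H w S r - wdist H w r u)) := sum_le_sum hrow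
    _ = 2 * (#S - 1) * SSRC H w S r := by
        rw [sum_add_distrib, ← mul_sum, sum_sub_distrib, sum_const, nsmul_eq_mul]
        unfold SSRC
        ring

-- For `k = 0` the right-hand side is `2 * R`, since `2 / 0 = 0`.
lemma two_mul_sub_one_mul_le_of_mul_le (k : ℕ) {A R : ℝ} (hA : 0 ≤ A) (h : k * A ≤ R) :
    2 * (k - 1) * A ≤ (2 - 2 / k) * R := by
  rcases Nat.eq_zero_or_pos k with rfl | hk₀
  · simp only [CharP.cast_eq_zero, zero_mul, div_zero, sub_zero] at h ⊢
    linarith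
  have hk : (1 : ℝ) ≤ k := by exact_mod_cast hk₀
  calc 2 * (k - 1) * A = (2 - 2 / k) * (k * A) := by field_simp
    _ ≤ (2 - 2 / k) * R :=
        mul_le_mul_of_nonneg_left h (sub_nonneg.2 (div_le_self zero_le_two hk))

theorem stmt11_general {V : Type*} [Fintype V] (G : SimpleGraph V) (w : V → V → ℝ)
    (hconn : G.Connected) (hpos : ∀ a b, G.Adj a b → 0 < w a b)
    (hsymm : ∀ a b, w a b = w b a) (S : Finset V) :
    ∃ T : SimpleGraph V, T ≤ G ∧ T.IsTree ∧
      ∑ u ∈ S, ∑ x ∈ S, wdist T w u x ≤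
        (2 - 2 / (S.card : ℝ)) * ∑ u ∈ S, ∑ x ∈ S, wdist G w u x := by
  have hw : ∀ a b, G.Adj a b → 0 ≤ w a b := fun a b h => (hpos a b h).le
  have := hconn.nonempty
  obtain ⟨r, hr⟩ := Finite.exists_min (SSRC G w S)
  obtain ⟨T, hTG, hT, hTr⟩ := exists_isTree_le_wdist_eq hconn hpos r
  refine ⟨T, hTG, hT, ?_⟩
  have hSSRC : SSRC T w S r = SSRC G w S r := sum_congr rfl fun x _ => hTr x
  have hcard : #S * SSRC G w S r ≤ RC G w S := by
    rw [← nsmul_eq_mul, ← sum_const]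
    exact sum_le_sum fun u _ => hr u
  calc RC T w S ≤ 2 * (#S - 1) * SSRC T w S r :=
        RC_le_two_mul_SSRC hT.connected.preconnected (fun a b h => hw a b (hTG h)) hsymm S r
    _ ≤ (2 - 2 / #S) * RC G w S := by
        rw [hSSRC]
        exact two_mul_sub_one_mul_le_of_mul_le _ (sum_nonneg fun x _ => wdist_nonneg hw r x) hcard

/-- Every connected weighted graph contains a spanning tree whose `S`-routing cost is at
most `(2 - 2/|S|)` times the routing cost of the graph. -/
theorem stmt11 {V : Type*} [Fintype V] (G : SimpleGraph V) (w : V → V → ℝ)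
    (hconn : G.Connected) (hpos : ∀ a b, G.Adj a b → 0 < w a b)
    (hsymm : ∀ a b, w a b = w b a) (S : Finset V) (hS : 2 ≤ S.card) :
    ∃ T : SimpleGraph V, T ≤ G ∧ T.IsTree ∧
      ∑ u ∈ S, ∑ x ∈ S, wdist T w u x ≤
        (2 - 2 / (S.card : ℝ)) * ∑ u ∈ S, ∑ x ∈ S, wdist G w u x :=
  stmt11_general G w hconn hpos hsymm S
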